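/- arXiv:1504.02536 — 8 statements merged into one kernel-verified Lean document; each statement's English description precedes it below -/
import Mathlib

section
/- For a joint probability distribution P_{AE} on a finite product set A × E and any s ∈ (0,∞), the maximum over probability distributions Q_E on E of the conditional Rényi entropy H_{1+s}(A|E|P_{AE}‖Q_E) := -(1/s) log ∑_{a,e} P_{AE}(a,e)^{1+s} Q_E(e)^{-s} equals the Gallager-form conditional Rényi entropy H^↑_{1+s}(A|E|P_{AE}) := -((1+s)/s) log ∑_e (∑_a P_{AE}(a,e)^{1+s})^{1/(1+s)}, and the maximum is attained at Q_E(e) = (∑_a P_{AE}(a,e)^{1+s})^{1/(1+s)} / ∑_{e'} (∑_a P_{AE}(a,e')^{1+s})^{1/(1+s)}. -/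
open Finset

/-!
With `g e := (∑ a, P (a, e) ^ (1 + s)) ^ (1 / (1 + s))` and `p := 1 + s`, the sum inside the
logarithm of `H_{1+s}(A|E|P‖Q)` is
`∑ e, g e ^ p * Q e ^ (1 - p) = ∑ e, Q e * (g e / Q e) ^ p`.
By convexity of `t ↦ t ^ p` (Jensen for the weights `Q`) this is at least `(∑ e, g e) ^ p`,
with equality when `g / Q` is constant, i.e. for `Q = g / ∑ g`. Taking `-(1/s) log` turns
this minimum into the maximum `H↑_{1+s}(A|E|P)`.
-/

namespace Real

variable {ι : Type*} (s : Finset ι) {g Q : ι → ℝ} {p : ℝ}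

theorem rpow_sum_le_sum_rpow_mul_rpow_one_sub (hg : ∀ i ∈ s, 0 ≤ g i)
    (hQ : ∀ i ∈ s, 0 < Q i) (hQsum : ∑ i ∈ s, Q i = 1) (hp : 1 ≤ p) :
    (∑ i ∈ s, g i) ^ p ≤ ∑ i ∈ s, g i ^ p * Q i ^ (1 - p) := by
  have hweighted : ∀ i ∈ s, Q i * (g i / Q i) ^ p = g i ^ p * Q i ^ (1 - p) := by
    intro i hi
    rw [div_rpow (hg i hi) (hQ i hi).le, rpow_sub (hQ i hi), rpow_one]
    ring
  calc (∑ i ∈ s, g i) ^ p = (∑ i ∈ s, Q i * (g i / Q i)) ^ p := by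
        congr 1
        exact sum_congr rfl fun i hi => (mul_div_cancel₀ _ (hQ i hi).ne').symm
    _ ≤ ∑ i ∈ s, Q i * (g i / Q i) ^ p :=
        rpow_arith_mean_le_arith_mean_rpow s Q _ (fun i hi => (hQ i hi).le) hQsum
          (fun i hi => div_nonneg (hg i hi) (hQ i hi).le) hp
    _ = ∑ i ∈ s, g i ^ p * Q i ^ (1 - p) := sum_congr rfl hweighted

theorem sum_rpow_mul_div_sum_rpow_one_sub (hg : ∀ i ∈ s, 0 ≤ g i)
    (hS : 0 < ∑ i ∈ s, g i) :
    ∑ i ∈ s, g i ^ p * (g i / ∑ j ∈ s, g j) ^ (1 - p) = (∑ i ∈ s, g i) ^ p := by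
  have hterm : ∀ i ∈ s, g i ^ p * (g i / ∑ j ∈ s, g j) ^ (1 - p)
      = g i / (∑ j ∈ s, g j) ^ (1 - p) := by
    intro i hi
    rw [div_rpow (hg i hi) hS.le, mul_div_assoc', ← rpow_add' (hg i hi) (by norm_num),
      add_sub_cancel, rpow_one]
  rw [sum_congr rfl hterm, ← sum_div, div_eq_iff (rpow_pos_of_pos hS _).ne',
    ← rpow_add hS, add_sub_cancel, rpow_one]

end Real

section Gallager

variable {ι : Type*} [Fintype ι] {f : ι → ℝ} {s : ℝ}

open Real

theorem sum_mul_rpow_neg_eq (hf : ∀ i, 0 ≤ f i) (hs : 0 < s) (Q : ι → ℝ) :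
    ∑ i, f i * Q i ^ (-s) = ∑ i, (f i ^ (1 / (1 + s))) ^ (1 + s) * Q i ^ (1 - (1 + s)) := by
  refine sum_congr rfl fun i _ => ?_
  rw [one_div, rpow_inv_rpow (hf i) (by linarith), sub_add_cancel_left]

theorem neg_div_mul_log_sum_mul_rpow_neg_le (hf : ∀ i, 0 < f i) (hs : 0 < s) {Q : ι → ℝ}
    (hQ : ∀ i, 0 < Q i) (hQsum : ∑ i, Q i = 1) :
    -(1 / s) * log (∑ i, f i * Q i ^ (-s)) ≤
      -((1 + s) / s) * log (∑ i, f i ^ (1 / (1 + s))) := by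
  have : Nonempty ι := not_isEmpty_iff.mp fun _ => by simp at hQsum
  have hS : 0 < ∑ i, f i ^ (1 / (1 + s)) :=
    sum_pos (fun i _ => rpow_pos_of_pos (hf i) _) univ_nonempty
  have hjensen : (∑ i, f i ^ (1 / (1 + s))) ^ (1 + s) ≤ ∑ i, f i * Q i ^ (-s) := by
    rw [sum_mul_rpow_neg_eq (fun i => (hf i).le) hs]
    exact rpow_sum_le_sum_rpow_mul_rpow_one_sub _ (fun i _ => (rpow_pos_of_pos (hf i) _).le)
      (fun i _ => hQ i) hQsum (by linarith)
  calc -(1 / s) * log (∑ i, f i * Q i ^ (-s))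
      ≤ -(1 / s) * log ((∑ i, f i ^ (1 / (1 + s))) ^ (1 + s)) :=
        mul_le_mul_of_nonpos_left (log_le_log (rpow_pos_of_pos hS _) hjensen)
          (neg_nonpos.mpr (one_div_pos.mpr hs).le)
    _ = -((1 + s) / s) * log (∑ i, f i ^ (1 / (1 + s))) := by rw [log_rpow hS]; ring

theorem neg_div_mul_log_sum_mul_tilted_rpow_neg [Nonempty ι] (hf : ∀ i, 0 < f i)
    (hs : 0 < s) :
    -(1 / s) * log (∑ i, f i *
        (f i ^ (1 / (1 + s)) / ∑ j, f j ^ (1 / (1 + s))) ^ (-s)) =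
      -((1 + s) / s) * log (∑ i, f i ^ (1 / (1 + s))) := by
  have hS : 0 < ∑ i, f i ^ (1 / (1 + s)) :=
    sum_pos (fun i _ => rpow_pos_of_pos (hf i) _) univ_nonempty
  rw [sum_mul_rpow_neg_eq (fun i => (hf i).le) hs, sum_rpow_mul_div_sum_rpow_one_sub _
    (fun i _ => (rpow_pos_of_pos (hf i) _).le) hS, log_rpow hS]
  ring

end Gallager

theorem conditional_renyi_sup_eq_gallager_general {A E : Type*} [Fintype A] [Fintype E]
    (P : A × E → ℝ) (hP : ∀ p, 0 ≤ P p)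
    (hmarg : ∀ e, 0 < ∑ a, P (a, e))
    (s : ℝ) (hs : 0 < s) :
    (∀ Q : E → ℝ, (∀ e, 0 < Q e) → ∑ e, Q e = 1 →
      -(1/s) * Real.log (∑ e, ∑ a, P (a, e) ^ (1 + s) * Q e ^ (-s)) ≤
        -((1 + s)/s) * Real.log (∑ e, (∑ a, P (a, e) ^ (1 + s)) ^ (1/(1 + s))))
    ∧
    -(1/s) * Real.log (∑ e, ∑ a, P (a, e) ^ (1 + s) *
        ((∑ a, P (a, e) ^ (1 + s)) ^ (1/(1 + s)) /
          ∑ e', (∑ a, P (a, e') ^ (1 + s)) ^ (1/(1 + s))) ^ (-s)) =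
      -((1 + s)/s) * Real.log (∑ e, (∑ a, P (a, e) ^ (1 + s)) ^ (1/(1 + s))) := by
  rcases isEmpty_or_nonempty E with hE | hE
  · simp
  have hf : ∀ e, 0 < ∑ a, P (a, e) ^ (1 + s) := fun e => by
    obtain ⟨a, -, ha⟩ := exists_lt_of_sum_lt (f := fun _ => (0 : ℝ)) (by simpa using hmarg e)
    exact sum_pos' (fun b _ => Real.rpow_nonneg (hP _) _)
      ⟨a, mem_univ a, Real.rpow_pos_of_pos ha _⟩
  simp only [← sum_mul]
  exact ⟨fun Q hQ hQsum => neg_div_mul_log_sum_mul_rpow_neg_le hf hs hQ hQsum,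
    neg_div_mul_log_sum_mul_tilted_rpow_neg hf hs⟩

/-- The maximum over probability distributions `Q` on `E` of the conditional Rényi
entropy `H_{1+s}(A|E|P‖Q)` equals the Gallager form `H↑_{1+s}(A|E|P)`, and the
maximum is attained at the tilted distribution. -/
theorem conditional_renyi_sup_eq_gallager {A E : Type*} [Fintype A] [Fintype E]
    (P : A × E → ℝ) (hP : ∀ p, 0 ≤ P p) (hPsum : ∑ p, P p = 1)
    (hmarg : ∀ e, 0 < ∑ a, P (a, e))
    (s : ℝ) (hs : 0 < s) :
    (∀ Q : E → ℝ, (∀ e, 0 < Q e) → ∑ e, Q e = 1 →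
      -(1/s) * Real.log (∑ e, ∑ a, P (a, e) ^ (1 + s) * Q e ^ (-s)) ≤
        -((1 + s)/s) * Real.log (∑ e, (∑ a, P (a, e) ^ (1 + s)) ^ (1/(1 + s))))
    ∧
    -(1/s) * Real.log (∑ e, ∑ a, P (a, e) ^ (1 + s) *
        ((∑ a, P (a, e) ^ (1 + s)) ^ (1/(1 + s)) /
          ∑ e', (∑ a, P (a, e') ^ (1 + s)) ^ (1/(1 + s))) ^ (-s)) =
      -((1 + s)/s) * Real.log (∑ e, (∑ a, P (a, e) ^ (1 + s)) ^ (1/(1 + s))) :=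
  conditional_renyi_sup_eq_gallager_general P hP hmarg s hs
end

section
/- For a joint probability distribution P_{AE} on a finite set A × E and s > -1, s ≠ 0, the Rényi security measure D_{1+s}(P_{AE} ‖ P_{mix,A} × P_E) decomposes as the sum of Sibson's Rényi mutual information I^{Sibson}_{1+s}(E∧A) = ((1+s)/s) log ∑_a P_A(a) (∑_e P_{E|A}(e|a)^{1+s} P_E(e)^{-s})^{1/(1+s)} and the Rényi divergence D_{1+s}(Q_A^{(s)} ‖ P_{mix,A}), where Q_A^{(s)}(a) := g_s(a)^{1/(1+s)} / ∑_{a'} g_s(a')^{1/(1+s)} with g_s(a) := ∑_e P_{AE}(a,e)^{1+s} P_E(e)^{-s}. -/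
/-!
With `g a = ∑ₑ P(a,e)^{1+s} P_E(e)^{-s}` and `S = ∑ₐ g a^{1/(1+s)}`, the left side is
`(1/s) log (|A|^s ∑ₐ g a)`, while `Q_A(a)^{1+s} = g a / S^{1+s}` makes the divergence of `Q_A` from
uniform equal to `(1/s) log (|A|^s ∑ₐ g a / S^{1+s})`; the identity is `log (x / y) = log x - log y`.
-/

open Finset Real

section RpowNormalization

variable {ι : Type*} [Fintype ι] {g : ι → ℝ}

lemma sum_rpow_eq_zero_iff_sum_eq_zero (hg : ∀ i, 0 ≤ g i) {r : ℝ} (hr : r ≠ 0) :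
    ∑ i, g i ^ r = 0 ↔ ∑ i, g i = 0 := by
  rw [sum_eq_zero_iff_of_nonneg fun i _ => rpow_nonneg (hg i) r,
    sum_eq_zero_iff_of_nonneg fun i _ => hg i]
  simp only [rpow_eq_zero (hg _) hr]

lemma sum_rpow_div_sum_rpow_rpow (hg : ∀ i, 0 ≤ g i) {t : ℝ} (ht : t ≠ 0) :
    ∑ i, (g i ^ (1 / t) / ∑ j, g j ^ (1 / t)) ^ t = (∑ i, g i) / (∑ j, g j ^ (1 / t)) ^ t := by
  have hS : 0 ≤ ∑ j, g j ^ (1 / t) := sum_nonneg fun j _ => rpow_nonneg (hg j) _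
  simp_rw [div_rpow (rpow_nonneg (hg _) _) hS, ← rpow_mul (hg _), one_div_mul_cancel ht,
    rpow_one, ← sum_div]

lemma log_mul_sum_eq_mul_log_sum_rpow_add_log_mul_sum_rpow_div (hg : ∀ i, 0 ≤ g i)
    {t c : ℝ} (ht : 0 < t) (hc : 0 < c) :
    log (c * ∑ i, g i) = t * log (∑ j, g j ^ (1 / t)) +
      log (c * ∑ i, (g i ^ (1 / t) / ∑ j, g j ^ (1 / t)) ^ t) := by
  have hS_iff := sum_rpow_eq_zero_iff_sum_eq_zero hg (one_div_ne_zero ht.ne')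
  rw [sum_rpow_div_sum_rpow_rpow hg ht.ne']
  by_cases hG : ∑ i, g i = 0
  · rw [hG, hS_iff.mpr hG]
    simp
  have hS : 0 < ∑ j, g j ^ (1 / t) :=
    (sum_nonneg fun j _ => rpow_nonneg (hg j) _).lt_of_ne' (hS_iff.not.mpr hG)
  rw [← mul_div_assoc, log_div (mul_ne_zero hc.ne' hG) (rpow_pos_of_pos hS t).ne',
    log_rpow hS]
  ring

end RpowNormalization

lemma sum_prod_rpow_mul_const_mul_rpow {A E : Type*} [Fintype A] [Fintype E]
    (P : A × E → ℝ) {Q : E → ℝ} (hQ : ∀ e, 0 ≤ Q e) {k : ℝ} (hk : 0 ≤ k)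
    (s : ℝ) :
    ∑ p : A × E, P p ^ (1 + s) * (k * Q p.2) ^ (-s) =
      k ^ (-s) * ∑ a, ∑ e, P (a, e) ^ (1 + s) * Q e ^ (-s) := by
  rw [Fintype.sum_prod_type, mul_sum]
  refine sum_congr rfl fun a _ => ?_
  rw [mul_sum]
  refine sum_congr rfl fun e _ => ?_
  rw [mul_rpow hk (hQ e)]
  ring

theorem renyi_divergence_sibson_decomposition_general {A E : Type*} [Fintype A] [Fintype E]
    [Nonempty A]
    (P : A × E → ℝ) (hP : ∀ p, 0 ≤ P p)
    (s : ℝ) (hs : -1 < s) :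
    let PE : E → ℝ := fun e => ∑ a, P (a, e)
    let g : A → ℝ := fun a => ∑ e, P (a, e) ^ (1 + s) * PE e ^ (-s)
    let QA : A → ℝ := fun a => g a ^ (1/(1 + s)) / ∑ a', g a' ^ (1/(1 + s))
    (1/s) * Real.log (∑ p : A × E,
        P p ^ (1 + s) * ((Fintype.card A : ℝ)⁻¹ * PE p.2) ^ (-s)) =
      ((1 + s)/s) * Real.log (∑ a, g a ^ (1/(1 + s))) +
      (1/s) * Real.log (∑ a, QA a ^ (1 + s) * ((Fintype.card A : ℝ)⁻¹) ^ (-s)) := by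
  intro PE g QA
  have hPE : ∀ e, 0 ≤ PE e := fun e => sum_nonneg fun a _ => hP (a, e)
  have hg : ∀ a, 0 ≤ g a := fun a =>
    sum_nonneg fun e _ => mul_nonneg (rpow_nonneg (hP _) _) (rpow_nonneg (hPE e) _)
  have hcard : (0 : ℝ) < (Fintype.card A : ℝ)⁻¹ := by positivity
  rw [sum_prod_rpow_mul_const_mul_rpow P hPE hcard.le, ← sum_mul, mul_comm _ (_ ^ (-s)),
    log_mul_sum_eq_mul_log_sum_rpow_add_log_mul_sum_rpow_div hg (by linarith : 0 < 1 + s)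
      (rpow_pos_of_pos hcard _)]
  ring

/-- Sibson-type decomposition: `D_{1+s}(P_{AE} ‖ P_mix × P_E)` equals Sibson's Rényi
mutual information plus `D_{1+s}(Q_A^{(s)} ‖ P_mix)`. -/
theorem renyi_divergence_sibson_decomposition {A E : Type*} [Fintype A] [Fintype E]
    [Nonempty A]
    (P : A × E → ℝ) (hP : ∀ p, 0 ≤ P p) (hPsum : ∑ p, P p = 1)
    (hPA : ∀ a, 0 < ∑ e, P (a, e)) (hPE : ∀ e, 0 < ∑ a, P (a, e))
    (s : ℝ) (hs : -1 < s) (hs0 : s ≠ 0) :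
    let PE : E → ℝ := fun e => ∑ a, P (a, e)
    let g : A → ℝ := fun a => ∑ e, P (a, e) ^ (1 + s) * PE e ^ (-s)
    let QA : A → ℝ := fun a => g a ^ (1/(1 + s)) / ∑ a', g a' ^ (1/(1 + s))
    (1/s) * Real.log (∑ p : A × E,
        P p ^ (1 + s) * ((Fintype.card A : ℝ)⁻¹ * PE p.2) ^ (-s)) =
      ((1 + s)/s) * Real.log (∑ a, g a ^ (1/(1 + s))) +
      (1/s) * Real.log (∑ a, QA a ^ (1 + s) * ((Fintype.card A : ℝ)⁻¹) ^ (-s)) :=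
  renyi_divergence_sibson_decomposition_general P hP s hs
end

section
/- For any function f : A → M between finite sets, any joint distribution P_{AE} on A × E, and any s > -1 with s ≠ 0, the conditional Rényi entropy does not increase under application of f to the first coordinate: H_{1+s}(f(A)|E|P_{AE}) ≤ H_{1+s}(A|E|P_{AE}), where H_{1+s}(A|E|P_{AE}) := -(1/s) log ∑_e P_E(e) ∑_a P_{A|E}(a|e)^{1+s}. -/
/-!
For each `e` the factor `P_E(e)^(-s)` is common to both sides, so it suffices to compare
`∑ a, P(a,e)^(1+s)` with `∑ m, (∑_{f a = m} P(a,e))^(1+s)`. On every fiber of `f`, `t ↦ t^(1+s)`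
is superadditive on `[0, ∞)` when `s > 0` and subadditive when `-1 < s < 0`; the sign of `-1/s`
turns either inequality between the sums into the same inequality between the entropies.
-/

open Finset

namespace Real

variable {ι : Type*} (s : Finset ι) {x : ι → ℝ} {p : ℝ}

lemma rpow_sum_le_sum_rpow (hx : ∀ i ∈ s, 0 ≤ x i) (hp : 0 < p) (hp1 : p ≤ 1) :
    (∑ i ∈ s, x i) ^ p ≤ ∑ i ∈ s, x i ^ p :=
  le_sum_of_subadditive_on_pred (· ^ p) (0 ≤ ·) (zero_rpow hp.ne').le
    (fun _ _ ha hb => rpow_add_le_add_rpow ha hb hp.le hp1) (fun _ _ => add_nonneg) x hx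

lemma sum_rpow_le_rpow_sum (hx : ∀ i ∈ s, 0 ≤ x i) (hp : 1 ≤ p) :
    ∑ i ∈ s, x i ^ p ≤ (∑ i ∈ s, x i) ^ p :=
  -- superadditivity is subadditivity with values in the order dual
  le_sum_of_subadditive_on_pred (N := ℝᵒᵈ) (fun y => OrderDual.toDual (y ^ p)) (0 ≤ ·)
    (zero_rpow (by linarith)).ge (fun _ _ ha hb => add_rpow_le_rpow_add ha hb hp)
    (fun _ _ => add_nonneg) x hx

end Real

section Fiber

variable {A M : Type*} [Fintype A] [Fintype M] [DecidableEq M] (f : A → M) {x : A → ℝ} {p : ℝ}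

lemma sum_fiber_rpow_le_sum_rpow (hx : ∀ a, 0 ≤ x a) (hp : 0 < p) (hp1 : p ≤ 1) :
    ∑ m, (∑ a ∈ univ.filter (fun a => f a = m), x a) ^ p ≤ ∑ a, x a ^ p := by
  rw [← sum_fiberwise univ f (fun a => x a ^ p)]
  exact sum_le_sum fun m _ => Real.rpow_sum_le_sum_rpow _ (fun a _ => hx a) hp hp1

lemma sum_rpow_le_sum_fiber_rpow (hx : ∀ a, 0 ≤ x a) (hp : 1 ≤ p) :
    ∑ a, x a ^ p ≤ ∑ m, (∑ a ∈ univ.filter (fun a => f a = m), x a) ^ p := by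
  rw [← sum_fiberwise univ f (fun a => x a ^ p)]
  exact sum_le_sum fun m _ => Real.sum_rpow_le_rpow_sum _ (fun a _ => hx a) hp

end Fiber

lemma sum_sum_rpow_mul_pos {ι E : Type*} [Fintype ι] [Fintype E] {Q : ι → E → ℝ}
    (hQ : ∀ i e, 0 ≤ Q i e) {w : E → ℝ} (hw : ∀ e, 0 ≤ w e) {i₀ : ι} {e₀ : E}
    (hQ₀ : 0 < Q i₀ e₀) (hw₀ : 0 < w e₀) (p : ℝ) :
    0 < ∑ e, ∑ i, Q i e ^ p * w e := by
  have hterm : ∀ i e, 0 ≤ Q i e ^ p * w e := fun i e =>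
    mul_nonneg (Real.rpow_nonneg (hQ i e) p) (hw e)
  refine sum_pos' (fun e _ => sum_nonneg fun i _ => hterm i e) ⟨e₀, mem_univ _, ?_⟩
  exact sum_pos' (fun i _ => hterm i e₀)
    ⟨i₀, mem_univ _, mul_pos (Real.rpow_pos_of_pos hQ₀ p) hw₀⟩

/-- Data processing inequality for the conditional Rényi entropy: applying a
function `f` to the first coordinate cannot increase `H_{1+s}(A|E|P_{AE})`. -/
theorem conditional_renyi_data_processing {A E M : Type*}
    [Fintype A] [Fintype E] [Fintype M] [DecidableEq M]
    (f : A → M) (P : A × E → ℝ) (hP : ∀ p, 0 ≤ P p) (hPsum : ∑ p, P p = 1)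
    (s : ℝ) (hs : -1 < s) (hs0 : s ≠ 0) :
    -(1/s) * Real.log (∑ e, ∑ m,
        (∑ a ∈ Finset.univ.filter (fun a => f a = m), P (a, e)) ^ (1 + s) *
          (∑ a, P (a, e)) ^ (-s)) ≤
      -(1/s) * Real.log (∑ e, ∑ a,
        P (a, e) ^ (1 + s) * (∑ a', P (a', e)) ^ (-s)) := by
  obtain ⟨⟨a₀, e₀⟩, -, hP₀⟩ : ∃ p ∈ univ, (0 : ℝ) < P p :=
    exists_lt_of_sum_lt (by simp [hPsum])
  have hw : ∀ e, 0 ≤ (∑ a, P (a, e)) ^ (-s) := fun e =>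
    Real.rpow_nonneg (sum_nonneg fun a _ => hP _) _
  have hw₀ : 0 < (∑ a, P (a, e₀)) ^ (-s) :=
    Real.rpow_pos_of_pos (hP₀.trans_le (single_le_sum (fun a _ => hP (a, e₀)) (mem_univ a₀))) _
  have hfib₀ : 0 < ∑ a ∈ univ.filter (fun a => f a = f a₀), P (a, e₀) :=
    hP₀.trans_le (single_le_sum (fun a _ => hP (a, e₀)) (by simp))
  have hfiber_pos :=
    sum_sum_rpow_mul_pos (Q := fun m e => ∑ a ∈ univ.filter (fun a => f a = m), P (a, e))
      (fun m e => sum_nonneg fun a _ => hP (a, e)) hw hfib₀ hw₀ (1 + s)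
  have hjoint_pos := sum_sum_rpow_mul_pos (Q := fun a e => P (a, e))
    (fun a e => hP (a, e)) hw hP₀ hw₀ (1 + s)
  simp_rw [← sum_mul] at hfiber_pos hjoint_pos ⊢
  rcases hs0.lt_or_gt with hneg | hpos
  · refine mul_le_mul_of_nonneg_left (Real.log_le_log hfiber_pos ?_) (by simp [hneg.le])
    gcongr with e
    · exact hw e
    · exact sum_fiber_rpow_le_sum_rpow f (fun a => hP (a, e)) (by linarith) (by linarith)
  · refine mul_le_mul_of_nonpos_left (Real.log_le_log hjoint_pos ?_) (by simp [hpos.le])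
    gcongr with e
    · exact hw e
    · exact sum_rpow_le_sum_fiber_rpow f (fun a => hP (a, e)) (by linarith)
end

section
/- Leftover-hash-type bound: Let f_X : A → {1,…,M} be a random hash function (indexed by a random variable X) that is ε-almost universal₂, i.e., Pr(f_X(a₁)=f_X(a₂)) ≤ ε/M for all distinct a₁,a₂ ∈ A. Then for any joint distribution P_{AE} on A × E and any s ∈ [0,1], exp(s·C_{1+s}(f_X(A)|E,X)) ≤ ε^s + M^s · exp(-s·H_{1+s}(A|E|P_{AE})), where C_{1+s}(f_X(A)|E,X) := log M - H_{1+s}(f_X(A)|E,X) and H_{1+s}(f_X(A)|E,X) := -(1/s) log E_X ∑_e P_E(e) ∑_{i=1}^M (∑_{a∈f_X^{-1}(i)} P_{A|E}(a|e))^{1+s}. -/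
open Finset

/-!
Write `P(i) = ∑_{f a = i} p a` for the mass of the fibre of the hash `f` over `i`. Then
`∑_i P(i)^{1+s} = ∑_a p a · P(f a)^s`, so it suffices to bound `E_X P(f_X a)^s` for each `a`.
By concavity of `t ↦ t^s` this is at most `(E_X P(f_X a))^s`; the expected fibre mass is
`p a` plus the collision terms, at most `p a + ε/M` by universality; and subadditivity
splits `(p a + ε/M)^s ≤ p a^s + (ε/M)^s`.
-/

section FiberMass

variable {A B X : Type*} [Fintype A] [Fintype X] [DecidableEq B]

def fiberMass (g : A → B) (p : A → ℝ) (b : B) : ℝ :=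
  ∑ a ∈ univ.filter (fun a => g a = b), p a

lemma fiberMass_nonneg (g : A → B) {p : A → ℝ} (hp : ∀ a, 0 ≤ p a) (b : B) :
    0 ≤ fiberMass g p b :=
  sum_nonneg fun a _ => hp a

lemma sum_fiberMass_rpow_one_add [Fintype B] (g : A → B) {p : A → ℝ} (hp : ∀ a, 0 ≤ p a)
    {s : ℝ} (hs : 0 ≤ s) :
    ∑ b, fiberMass g p b ^ (1 + s) = ∑ a, p a * fiberMass g p (g a) ^ s :=
  calc ∑ b, fiberMass g p b ^ (1 + s)
      = ∑ b, ∑ a ∈ univ.filter (fun a => g a = b), p a * fiberMass g p b ^ s := by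
        refine sum_congr rfl fun b _ => ?_
        rw [Real.rpow_add' (fiberMass_nonneg g hp b) (by positivity), Real.rpow_one,
          fiberMass, sum_mul]
    _ = ∑ b, ∑ a ∈ univ.filter (fun a => g a = b), p a * fiberMass g p (g a) ^ s := by
        refine sum_congr rfl fun b _ => sum_congr rfl fun a ha => ?_
        rw [(mem_filter.mp ha).2]
    _ = ∑ a, p a * fiberMass g p (g a) ^ s := sum_fiberwise univ g _

lemma sum_mul_fiberMass_le (f : X → A → B) {μ : X → ℝ} (hμsum : ∑ x, μ x = 1)
    {p : A → ℝ} (hp : ∀ a, 0 ≤ p a) (hpsum : ∑ a, p a ≤ 1) {δ : ℝ} (hδ : 0 ≤ δ)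
    (huniv : ∀ a₁ a₂, a₁ ≠ a₂ → ∑ x ∈ univ.filter (fun x => f x a₁ = f x a₂), μ x ≤ δ)
    (a : A) :
    ∑ x, μ x * fiberMass (f x) p (f x a) ≤ p a + δ := by
  classical
  have hswap : ∑ x, μ x * fiberMass (f x) p (f x a)
      = ∑ a', p a' * ∑ x ∈ univ.filter (fun x => f x a' = f x a), μ x := by
    simp only [fiberMass, mul_sum, sum_filter]
    rw [sum_comm]
    refine sum_congr rfl fun a' _ => sum_congr rfl fun x _ => ?_
    split_ifs <;> ring
  have hcoll : ∑ a' ∈ univ.erase a, p a' * ∑ x ∈ univ.filter (fun x => f x a' = f x a), μ x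
      ≤ δ :=
    calc _ ≤ ∑ a' ∈ univ.erase a, p a' * δ :=
          sum_le_sum fun a' ha' => mul_le_mul_of_nonneg_left
            (huniv a' a (ne_of_mem_erase ha')) (hp a')
      _ ≤ ∑ a', p a' * δ :=
          sum_le_sum_of_subset_of_nonneg (erase_subset _ _)
            fun a' _ _ => mul_nonneg (hp a') hδ
      _ ≤ δ := by rw [← sum_mul]; exact mul_le_of_le_one_left hδ hpsum
  have hdiag : p a * ∑ x ∈ univ.filter (fun x => f x a = f x a), μ x = p a := by
    simp [hμsum]
  rw [hswap, ← add_sum_erase _ _ (mem_univ a), hdiag]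
  exact add_le_add_right hcoll _

lemma sum_mul_fiberMass_rpow_le (f : X → A → B) {μ : X → ℝ} (hμ : ∀ x, 0 ≤ μ x)
    (hμsum : ∑ x, μ x = 1) {p : A → ℝ} (hp : ∀ a, 0 ≤ p a) (hpsum : ∑ a, p a ≤ 1)
    {δ : ℝ} (hδ : 0 ≤ δ)
    (huniv : ∀ a₁ a₂, a₁ ≠ a₂ → ∑ x ∈ univ.filter (fun x => f x a₁ = f x a₂), μ x ≤ δ)
    {s : ℝ} (hs : 0 ≤ s) (hs1 : s ≤ 1) (a : A) :
    ∑ x, μ x * fiberMass (f x) p (f x a) ^ s ≤ p a ^ s + δ ^ s :=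
  calc ∑ x, μ x * fiberMass (f x) p (f x a) ^ s
      ≤ (∑ x, μ x * fiberMass (f x) p (f x a)) ^ s := by
        simpa only [smul_eq_mul] using (Real.concaveOn_rpow hs hs1).le_map_sum
          (fun x _ => hμ x) hμsum fun x _ => Set.mem_Ici.mpr (fiberMass_nonneg _ hp _)
    _ ≤ (p a + δ) ^ s :=
        Real.rpow_le_rpow (sum_nonneg fun x _ => mul_nonneg (hμ x) (fiberMass_nonneg _ hp _))
          (sum_mul_fiberMass_le f hμsum hp hpsum hδ huniv a) hs
    _ ≤ p a ^ s + δ ^ s := Real.rpow_add_le_add_rpow (hp a) hδ hs hs1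

lemma sum_mul_sum_fiberMass_rpow_one_add_le [Fintype B] (f : X → A → B) {μ : X → ℝ}
    (hμ : ∀ x, 0 ≤ μ x) (hμsum : ∑ x, μ x = 1) {p : A → ℝ} (hp : ∀ a, 0 ≤ p a)
    (hpsum : ∑ a, p a ≤ 1) {δ : ℝ} (hδ : 0 ≤ δ)
    (huniv : ∀ a₁ a₂, a₁ ≠ a₂ → ∑ x ∈ univ.filter (fun x => f x a₁ = f x a₂), μ x ≤ δ)
    {s : ℝ} (hs : 0 ≤ s) (hs1 : s ≤ 1) :
    ∑ x, μ x * ∑ b, fiberMass (f x) p b ^ (1 + s) ≤ ∑ a, p a ^ (1 + s) + δ ^ s :=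
  calc ∑ x, μ x * ∑ b, fiberMass (f x) p b ^ (1 + s)
      = ∑ a, p a * ∑ x, μ x * fiberMass (f x) p (f x a) ^ s := by
        simp_rw [sum_fiberMass_rpow_one_add _ hp hs, mul_sum]
        rw [sum_comm]
        exact sum_congr rfl fun a _ => sum_congr rfl fun x _ => mul_left_comm _ _ _
    _ ≤ ∑ a, p a * (p a ^ s + δ ^ s) := by
        gcongr with a
        · exact hp a
        · exact sum_mul_fiberMass_rpow_le f hμ hμsum hp hpsum hδ huniv hs hs1 a
    _ = ∑ a, p a ^ (1 + s) + (∑ a, p a) * δ ^ s := by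
        simp_rw [mul_add, sum_add_distrib, sum_mul]
        congr 1
        exact sum_congr rfl fun a _ => by
          rw [Real.rpow_add' (hp a) (by positivity), Real.rpow_one]
    _ ≤ ∑ a, p a ^ (1 + s) + δ ^ s := by
        gcongr
        exact mul_le_of_le_one_left (by positivity) hpsum

end FiberMass

/-- Leftover-hash-type bound: for an `ε`-almost universal₂ random hash `f_X` into
`{1,…,M}` and `s ∈ (0,1]`,
`exp(s·C_{1+s}(f_X(A)|E,X)) ≤ ε^s + M^s · exp(-s·H_{1+s}(A|E|P_{AE}))`. -/
theorem leftover_hash_renyi_plus {A E X : Type*} [Fintype A] [Fintype E] [Fintype X]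
    (M : ℕ) (hM : 0 < M) (f : X → A → Fin M)
    (μ : X → ℝ) (hμ : ∀ x, 0 ≤ μ x) (hμsum : ∑ x, μ x = 1)
    (ε : ℝ) (hε : 0 ≤ ε)
    (huniv : ∀ a₁ a₂ : A, a₁ ≠ a₂ →
      ∑ x ∈ Finset.univ.filter (fun x => f x a₁ = f x a₂), μ x ≤ ε / M)
    (PE : E → ℝ) (hPE : ∀ e, 0 ≤ PE e) (hPEsum : ∑ e, PE e = 1)
    (PA : A → E → ℝ) (hPA : ∀ a e, 0 ≤ PA a e) (hPAsum : ∀ e, ∑ a, PA a e = 1)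
    (s : ℝ) (hs : 0 < s) (hs1 : s ≤ 1) :
    (M : ℝ) ^ s * (∑ x, μ x * ∑ e, PE e * ∑ i : Fin M,
        (∑ a ∈ Finset.univ.filter (fun a => f x a = i), PA a e) ^ (1 + s)) ≤
      ε ^ s + (M : ℝ) ^ s * ∑ e, PE e * ∑ a, PA a e ^ (1 + s) := by
  have hMpos : (0 : ℝ) < M := Nat.cast_pos.mpr hM
  have hcond : ∀ e, ∑ x, μ x * ∑ i, fiberMass (f x) (PA · e) i ^ (1 + s)
      ≤ ∑ a, PA a e ^ (1 + s) + (ε / M) ^ s := fun e =>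
    sum_mul_sum_fiberMass_rpow_one_add_le f hμ hμsum (hPA · e) (hPAsum e).le
      (by positivity) huniv hs.le hs1
  calc (M : ℝ) ^ s * (∑ x, μ x * ∑ e, PE e * ∑ i : Fin M,
        (∑ a ∈ Finset.univ.filter (fun a => f x a = i), PA a e) ^ (1 + s))
      = (M : ℝ) ^ s * ∑ e, PE e * ∑ x, μ x * ∑ i, fiberMass (f x) (PA · e) i ^ (1 + s) := by
        congr 1
        simp_rw [mul_sum]
        rw [sum_comm]
        exact sum_congr rfl fun e _ => sum_congr rfl fun x _ =>
          sum_congr rfl fun i _ => mul_left_comm _ _ _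
    _ ≤ (M : ℝ) ^ s * ∑ e, PE e * (∑ a, PA a e ^ (1 + s) + (ε / M) ^ s) := by
        gcongr with e
        · exact hPE e
        · exact hcond e
    _ = (M : ℝ) ^ s * (ε / M) ^ s + (M : ℝ) ^ s * ∑ e, PE e * ∑ a, PA a e ^ (1 + s) := by
        simp_rw [mul_add, sum_add_distrib, ← sum_mul, hPEsum, one_mul]
        ring
    _ = ε ^ s + (M : ℝ) ^ s * ∑ e, PE e * ∑ a, PA a e ^ (1 + s) := by
        rw [← Real.mul_rpow hMpos.le (by positivity), mul_div_cancel₀ _ hMpos.ne']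
end

section
/- Gallager-form leftover-hash bound: Under the same assumptions as the ε-almost universal₂ hashing setup, for any s ∈ [0,1], exp((s/(1+s)) · C^↑_{1+s}(f_X(A)|E,X)) ≤ ε^{s/(1+s)} + M^{s/(1+s)} exp(-(s/(1+s)) H^↑_{1+s}(A|E|P_{AE})), where exp(-(s/(1+s)) H^↑_{1+s}(f_X(A)|E,X)) := E_X ∑_e P_E(e) (∑_{i=1}^M (∑_{a∈f_X^{-1}(i)} P_{A|E}(a|e))^{1+s})^{1/(1+s)} and C^↑_{1+s} := log M - H^↑_{1+s}. -/
open Finset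

/-!
For a fixed hash `g` and distribution `p`, the fibre of `a` has mass `p a + c a`, where `c a` is
the mass of the other points colliding with `a`. Hence
`∑ᵢ (fibre mass)^(1+s) = ∑ₐ p a (p a + c a)^s ≤ ∑ₐ p a^(1+s) + ∑ₐ p a (c a)^s`
by subadditivity of `t ↦ t^s`, and subadditivity of `t ↦ t^(1/(1+s))` separates the two terms.
Averaging over the random hash, Jensen's inequality for these concave powers moves the
expectation inside, where the universal₂ property bounds the expected collision mass by `ε/M`.
The collision term thus contributes at most `(ε/M)^(s/(1+s))`, i.e. `ε^(s/(1+s))` after the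
factor `M^(s/(1+s))`.
-/

theorem Real.sum_mul_rpow_le_rpow_sum_mul {ι : Type*} (t : Finset ι) {w z : ι → ℝ}
    (hw : ∀ i ∈ t, 0 ≤ w i) (hw₁ : ∑ i ∈ t, w i = 1) (hz : ∀ i ∈ t, 0 ≤ z i)
    {p : ℝ} (hp₀ : 0 ≤ p) (hp₁ : p ≤ 1) :
    ∑ i ∈ t, w i * z i ^ p ≤ (∑ i ∈ t, w i * z i) ^ p :=
  (Real.concaveOn_rpow hp₀ hp₁).le_map_sum hw hw₁ hz

section CollisionMass

variable {A β : Type*} [Fintype A] [DecidableEq A] [DecidableEq β]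

def collisionMass (g : A → β) (p : A → ℝ) (a : A) : ℝ :=
  ∑ a' ∈ univ.erase a with g a' = g a, p a'

theorem collisionMass_nonneg {p : A → ℝ} (hp : ∀ a, 0 ≤ p a) (g : A → β) (a : A) :
    0 ≤ collisionMass g p a :=
  sum_nonneg fun a' _ => hp a'

theorem sum_fiber_eq_add_collisionMass (g : A → β) (p : A → ℝ) (a : A) :
    ∑ a' with g a' = g a, p a' = p a + collisionMass g p a := by
  rw [collisionMass, filter_erase, add_sum_erase _ _ (by simp)]

theorem sum_rpow_one_add_sum_fiber_eq [Fintype β] {p : A → ℝ} (hp : ∀ a, 0 ≤ p a)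
    (g : A → β) {s : ℝ} (hs : 0 ≤ s) :
    ∑ i, (∑ a with g a = i, p a) ^ (1 + s) = ∑ a, p a * (p a + collisionMass g p a) ^ s := by
  rw [← sum_fiberwise univ g fun a => p a * (p a + collisionMass g p a) ^ s]
  refine sum_congr rfl fun i _ => ?_
  rw [Real.rpow_add' (sum_nonneg fun a _ => hp a) (by positivity), Real.rpow_one, sum_mul]
  refine sum_congr rfl fun a ha => ?_
  rw [← sum_fiber_eq_add_collisionMass, (mem_filter.1 ha).2]

theorem sum_rpow_one_add_sum_fiber_le [Fintype β] {p : A → ℝ} (hp : ∀ a, 0 ≤ p a)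
    (g : A → β) {s : ℝ} (hs₀ : 0 ≤ s) (hs₁ : s ≤ 1) :
    ∑ i, (∑ a with g a = i, p a) ^ (1 + s) ≤
      ∑ a, p a ^ (1 + s) + ∑ a, p a * collisionMass g p a ^ s := by
  rw [sum_rpow_one_add_sum_fiber_eq hp g hs₀, ← sum_add_distrib]
  refine sum_le_sum fun a _ => ?_
  calc p a * (p a + collisionMass g p a) ^ s
      ≤ p a * (p a ^ s + collisionMass g p a ^ s) :=
        mul_le_mul_of_nonneg_left
          (Real.rpow_add_le_add_rpow (hp a) (collisionMass_nonneg hp g a) hs₀ hs₁) (hp a)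
    _ = p a ^ (1 + s) + p a * collisionMass g p a ^ s := by
        rw [Real.rpow_add' (hp a) (by positivity), Real.rpow_one, mul_add]

theorem rpow_sum_rpow_one_add_sum_fiber_le [Fintype β] {p : A → ℝ} (hp : ∀ a, 0 ≤ p a)
    (g : A → β) {s : ℝ} (hs₀ : 0 ≤ s) (hs₁ : s ≤ 1) :
    (∑ i, (∑ a with g a = i, p a) ^ (1 + s)) ^ (1 / (1 + s)) ≤
      (∑ a, p a ^ (1 + s)) ^ (1 / (1 + s)) +
        (∑ a, p a * collisionMass g p a ^ s) ^ (1 / (1 + s)) := by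
  have hr₀ : 0 ≤ 1 / (1 + s) := by positivity
  have hr₁ : 1 / (1 + s) ≤ 1 := div_le_one_of_le₀ (by linarith) (by linarith)
  calc (∑ i, (∑ a with g a = i, p a) ^ (1 + s)) ^ (1 / (1 + s))
      ≤ (∑ a, p a ^ (1 + s) + ∑ a, p a * collisionMass g p a ^ s) ^ (1 / (1 + s)) :=
        Real.rpow_le_rpow (sum_nonneg fun i _ => Real.rpow_nonneg (sum_nonneg fun a _ => hp a) _)
          (sum_rpow_one_add_sum_fiber_le hp g hs₀ hs₁) hr₀
    _ ≤ _ := Real.rpow_add_le_add_rpow (sum_nonneg fun a _ => Real.rpow_nonneg (hp a) _)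
          (sum_nonneg fun a _ => mul_nonneg (hp a)
            (Real.rpow_nonneg (collisionMass_nonneg hp g a) _)) hr₀ hr₁

variable {X : Type*} [Fintype X] (f : X → A → β) {μ : X → ℝ} {δ : ℝ} {p : A → ℝ}

theorem sum_mul_collisionMass_le (hp : ∀ a, 0 ≤ p a) (hp₁ : ∑ a, p a ≤ 1) (hδ : 0 ≤ δ)
    (huniv : ∀ a₁ a₂, a₁ ≠ a₂ → ∑ x with f x a₁ = f x a₂, μ x ≤ δ) (a : A) :
    ∑ x, μ x * collisionMass (f x) p a ≤ δ :=
  calc ∑ x, μ x * collisionMass (f x) p a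
      = ∑ a' ∈ univ.erase a, p a' * ∑ x with f x a' = f x a, μ x := by
        simp only [collisionMass, sum_filter, mul_sum, mul_ite, mul_zero]
        rw [sum_comm]
        exact sum_congr rfl fun a' _ => sum_congr rfl fun x _ => by split_ifs <;> ring
    _ ≤ ∑ a' ∈ univ.erase a, p a' * δ :=
        sum_le_sum fun a' ha' =>
          mul_le_mul_of_nonneg_left (huniv a' a (ne_of_mem_erase ha')) (hp a')
    _ ≤ δ := by
        rw [← sum_mul]
        refine mul_le_of_le_one_left hδ ((sum_le_sum_of_subset_of_nonneg (erase_subset a _)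
          fun a' _ _ => hp a').trans hp₁)

theorem sum_mul_sum_mul_collisionMass_rpow_le (hμ : ∀ x, 0 ≤ μ x) (hμ₁ : ∑ x, μ x = 1)
    (hp : ∀ a, 0 ≤ p a) (hp₁ : ∑ a, p a ≤ 1) (hδ : 0 ≤ δ)
    (huniv : ∀ a₁ a₂, a₁ ≠ a₂ → ∑ x with f x a₁ = f x a₂, μ x ≤ δ)
    {s : ℝ} (hs₀ : 0 ≤ s) (hs₁ : s ≤ 1) :
    ∑ x, μ x * ∑ a, p a * collisionMass (f x) p a ^ s ≤ δ ^ s :=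
  calc ∑ x, μ x * ∑ a, p a * collisionMass (f x) p a ^ s
      = ∑ a, p a * ∑ x, μ x * collisionMass (f x) p a ^ s := by
        simp only [mul_sum]
        rw [sum_comm]
        exact sum_congr rfl fun a _ => sum_congr rfl fun x _ => mul_left_comm _ _ _
    _ ≤ ∑ a, p a * (∑ x, μ x * collisionMass (f x) p a) ^ s :=
        sum_le_sum fun a _ => mul_le_mul_of_nonneg_left
          (Real.sum_mul_rpow_le_rpow_sum_mul univ (fun x _ => hμ x) hμ₁
            (fun x _ => collisionMass_nonneg hp _ a) hs₀ hs₁) (hp a)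
    _ ≤ ∑ a, p a * δ ^ s :=
        sum_le_sum fun a _ => mul_le_mul_of_nonneg_left
          (Real.rpow_le_rpow (sum_nonneg fun x _ => mul_nonneg (hμ x) (collisionMass_nonneg hp _ a))
            (sum_mul_collisionMass_le f hp hp₁ hδ huniv a) hs₀) (hp a)
    _ ≤ δ ^ s := by
        rw [← sum_mul]
        exact mul_le_of_le_one_left (by positivity) hp₁

theorem sum_mul_rpow_sum_rpow_one_add_sum_fiber_le [Fintype β] (hμ : ∀ x, 0 ≤ μ x)
    (hμ₁ : ∑ x, μ x = 1) (hp : ∀ a, 0 ≤ p a) (hp₁ : ∑ a, p a ≤ 1) (hδ : 0 ≤ δ)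
    (huniv : ∀ a₁ a₂, a₁ ≠ a₂ → ∑ x with f x a₁ = f x a₂, μ x ≤ δ)
    {s : ℝ} (hs₀ : 0 ≤ s) (hs₁ : s ≤ 1) :
    ∑ x, μ x * (∑ i, (∑ a with f x a = i, p a) ^ (1 + s)) ^ (1 / (1 + s)) ≤
      (∑ a, p a ^ (1 + s)) ^ (1 / (1 + s)) + δ ^ (s / (1 + s)) := by
  set r := 1 / (1 + s)
  set D := ∑ a, p a ^ (1 + s)
  set Z := fun x => ∑ a, p a * collisionMass (f x) p a ^ s
  have hr₀ : 0 ≤ r := by positivity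
  have hr₁ : r ≤ 1 := div_le_one_of_le₀ (by linarith) (by linarith)
  have hZ : ∀ x, 0 ≤ Z x := fun x => sum_nonneg fun a _ =>
    mul_nonneg (hp a) (Real.rpow_nonneg (collisionMass_nonneg hp _ a) _)
  calc ∑ x, μ x * (∑ i, (∑ a with f x a = i, p a) ^ (1 + s)) ^ r
      ≤ ∑ x, μ x * (D ^ r + Z x ^ r) := sum_le_sum fun x _ =>
        mul_le_mul_of_nonneg_left (rpow_sum_rpow_one_add_sum_fiber_le hp (f x) hs₀ hs₁) (hμ x)
    _ = D ^ r + ∑ x, μ x * Z x ^ r := by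
        simp only [mul_add, sum_add_distrib, ← sum_mul, hμ₁, one_mul]
    _ ≤ D ^ r + (∑ x, μ x * Z x) ^ r := by
        gcongr
        exact Real.sum_mul_rpow_le_rpow_sum_mul univ (fun x _ => hμ x) hμ₁ (fun x _ => hZ x)
          hr₀ hr₁
    _ ≤ D ^ r + (δ ^ s) ^ r := by
        gcongr
        · exact sum_nonneg fun x _ => mul_nonneg (hμ x) (hZ x)
        · exact sum_mul_sum_mul_collisionMass_rpow_le f hμ hμ₁ hp hp₁ hδ huniv hs₀ hs₁
    _ = D ^ r + δ ^ (s / (1 + s)) := by rw [← Real.rpow_mul hδ, mul_one_div]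

end CollisionMass

/-- Gallager-form leftover-hash bound: for an `ε`-almost universal₂ random hash
`f_X` into `{1,…,M}` and `s ∈ (0,1]`,
`exp((s/(1+s))·C↑_{1+s}(f_X(A)|E,X)) ≤ ε^{s/(1+s)} + M^{s/(1+s)} exp(-(s/(1+s)) H↑_{1+s}(A|E|P_{AE}))`. -/
theorem leftover_hash_renyi_gallager {A E X : Type*} [Fintype A] [Fintype E] [Fintype X]
    (M : ℕ) (hM : 0 < M) (f : X → A → Fin M)
    (μ : X → ℝ) (hμ : ∀ x, 0 ≤ μ x) (hμsum : ∑ x, μ x = 1)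
    (ε : ℝ) (hε : 0 ≤ ε)
    (huniv : ∀ a₁ a₂ : A, a₁ ≠ a₂ →
      ∑ x ∈ Finset.univ.filter (fun x => f x a₁ = f x a₂), μ x ≤ ε / M)
    (PE : E → ℝ) (hPE : ∀ e, 0 ≤ PE e) (hPEsum : ∑ e, PE e = 1)
    (PA : A → E → ℝ) (hPA : ∀ a e, 0 ≤ PA a e) (hPAsum : ∀ e, ∑ a, PA a e = 1)
    (s : ℝ) (hs : 0 < s) (hs1 : s ≤ 1) :
    (M : ℝ) ^ (s/(1 + s)) * (∑ x, μ x * ∑ e, PE e *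
        (∑ i : Fin M,
          (∑ a ∈ Finset.univ.filter (fun a => f x a = i), PA a e) ^ (1 + s))
            ^ (1/(1 + s))) ≤
      ε ^ (s/(1 + s)) + (M : ℝ) ^ (s/(1 + s)) *
        ∑ e, PE e * (∑ a, PA a e ^ (1 + s)) ^ (1/(1 + s)) := by
  classical
  set q := s / (1 + s)
  set D := fun e => (∑ a, PA a e ^ (1 + s)) ^ (1 / (1 + s))
  set F := fun x e =>
    (∑ i : Fin M, (∑ a with f x a = i, PA a e) ^ (1 + s)) ^ (1 / (1 + s))
  have hM₀ : (0 : ℝ) < M := Nat.cast_pos.2 hM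
  have hfixed_e : ∀ e, ∑ x, μ x * F x e ≤ D e + (ε / M) ^ q := fun e =>
    sum_mul_rpow_sum_rpow_one_add_sum_fiber_le f hμ hμsum (fun a => hPA a e) (hPAsum e).le
      (by positivity) huniv hs.le hs1
  calc (M : ℝ) ^ q * ∑ x, μ x * ∑ e, PE e * F x e
      = (M : ℝ) ^ q * ∑ e, PE e * ∑ x, μ x * F x e := by
        simp only [mul_sum]
        rw [sum_comm]
        simp only [mul_left_comm]
    _ ≤ (M : ℝ) ^ q * ∑ e, PE e * (D e + (ε / M) ^ q) := by
        gcongr with e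
        · exact hPE e
        · exact hfixed_e e
    _ = ((M : ℝ) * (ε / M)) ^ q + (M : ℝ) ^ q * ∑ e, PE e * D e := by
        rw [Real.mul_rpow hM₀.le (by positivity)]
        simp only [mul_add, sum_add_distrib, ← sum_mul, hPEsum]
        ring
    _ = ε ^ q + (M : ℝ) ^ q * ∑ e, PE e * D e := by rw [mul_div_cancel₀ ε hM₀.ne']
end

section
/- Lower-bound one-shot direct bound: For an ε-almost universal₂ random hash f_X : A → {1,…,M}, any joint distribution P_{AE}, and any s ∈ [0,1], exp(-s C_{1-s}(f_X(A)|E,X)) ≥ 2^{-s} ∑_{(a,e): P_{A|E}(a|e) ≥ ε/M} P_{AE}(a,e) P_{A|E}(a|e)^{-s} M^{-s} + 2^{-s} ∑_{(a,e): P_{A|E}(a|e) < ε/M} P_{AE}(a,e) ε^{-s}. -/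
open Finset Real

/-!
For fixed `e` and `a`, universality bounds the expected `P_{A|E}(·|e)`-mass of the bucket
`f_X⁻¹(f_X a)` by `P_{A|E}(a|e) + ε/M ≤ 2 max(P_{A|E}(a|e), ε/M)`. As `x ↦ x^{-s}` is convex and
decreasing, Jensen's inequality turns this into a lower bound on the expected `-s`-th power of
the bucket mass. Weighting by `P_{A|E}(a|e)` and summing over `a`, each bucket `i` contributes
`P(i|e)^{1-s}`; the two cases of the maximum give the two sums of the bound.
-/

lemma convexOn_rpow_of_nonpos {p : ℝ} (hp : p ≤ 0) :
    ConvexOn ℝ (Set.Ioi 0) fun x : ℝ ↦ x ^ p := by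
  refine ⟨convex_Ioi 0, fun x (hx : 0 < x) y (hy : 0 < y) a b ha hb hab ↦ ?_⟩
  have hlog : a * log x + b * log y ≤ log (a * x + b * y) :=
    strictConcaveOn_log_Ioi.concaveOn.2 hx hy ha hb hab
  have hxy : 0 < a * x + b * y := by
    rcases ha.eq_or_lt with rfl | ha'
    · simp_all
    · positivity
  simp only [smul_eq_mul, rpow_def_of_pos hx, rpow_def_of_pos hy, rpow_def_of_pos hxy]
  calc exp (log (a * x + b * y) * p) ≤ exp (a * (log x * p) + b * (log y * p)) :=
        exp_le_exp.2 (by nlinarith)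
    _ ≤ a * exp (log x * p) + b * exp (log y * p) := convexOn_exp.2 trivial trivial ha hb hab

section Hashing

variable {A X β : Type*} [Fintype A] [Fintype X] [DecidableEq β]

lemma sum_mul_rpow_fiber_le_sum_rpow [Fintype β] (g : A → β) (P : A → ℝ) (hP : ∀ a, 0 ≤ P a)
    (s : ℝ) :
    ∑ a, P a * (∑ a' ∈ univ.filter (fun a' ↦ g a' = g a), P a') ^ (-s) ≤
      ∑ i, (∑ a ∈ univ.filter (fun a ↦ g a = i), P a) ^ (1 - s) := by
  set Q : β → ℝ := fun i ↦ ∑ a ∈ univ.filter (fun a ↦ g a = i), P a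
  rw [← sum_fiberwise_of_maps_to (fun a _ ↦ mem_univ (g a))]
  refine sum_le_sum fun i _ ↦ ?_
  have hfiber : ∑ a ∈ univ.filter (fun a ↦ g a = i), P a * Q (g a) ^ (-s) = Q i * Q i ^ (-s) := by
    rw [sum_mul]
    exact sum_congr rfl fun a ha ↦ by rw [(mem_filter.1 ha).2]
  rw [hfiber]
  have hQ0 : 0 ≤ Q i := sum_nonneg fun a _ ↦ hP a
  rcases hQ0.eq_or_lt with hQ | hQ
  · rw [← hQ, zero_mul]
    exact rpow_nonneg hQ0 _
  · rw [sub_eq_add_neg, rpow_add hQ, rpow_one]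

variable (f : X → A → β) {μ : X → ℝ} (hμsum : ∑ x, μ x = 1) {P : A → ℝ} (hP : ∀ a, 0 ≤ P a)
  {δ : ℝ} (hδ : 0 ≤ δ)
  (huniv : ∀ a₁ a₂ : A, a₁ ≠ a₂ → ∑ x ∈ univ.filter (fun x ↦ f x a₁ = f x a₂), μ x ≤ δ)
  (hPsum : ∑ a, P a ≤ 1)
include hμsum hP hδ huniv hPsum

lemma expected_fiber_mass_le (a : A) :
    ∑ x, μ x * ∑ a' ∈ univ.filter (fun a' ↦ f x a' = f x a), P a' ≤ P a + δ := by
  classical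
  have hswap : ∑ x, μ x * ∑ a' ∈ univ.filter (fun a' ↦ f x a' = f x a), P a' =
      ∑ a', P a' * ∑ x ∈ univ.filter (fun x ↦ f x a' = f x a), μ x := by
    simp only [mul_sum, sum_filter]
    rw [sum_comm]
    exact sum_congr rfl fun a' _ ↦ sum_congr rfl fun x _ ↦ by split_ifs <;> ring
  have hcoll : ∑ a' ∈ univ.erase a, P a' * ∑ x ∈ univ.filter (fun x ↦ f x a' = f x a), μ x ≤ δ :=
    calc _ ≤ ∑ a' ∈ univ.erase a, P a' * δ :=
          sum_le_sum fun a' ha' ↦ mul_le_mul_of_nonneg_left (huniv a' a (ne_of_mem_erase ha')) (hP a')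
      _ ≤ ∑ a', P a' * δ := sum_le_sum_of_subset_of_nonneg (erase_subset _ _)
          fun a' _ _ ↦ mul_nonneg (hP a') hδ
      _ ≤ δ := by rw [← sum_mul]; exact mul_le_of_le_one_left hδ hPsum
  have hself : P a * ∑ x ∈ univ.filter (fun x ↦ f x a = f x a), μ x = P a := by simp [hμsum]
  rw [hswap, ← add_sum_erase _ _ (mem_univ a), hself]
  exact add_le_add_right hcoll _

lemma rpow_two_mul_max_le_expected_rpow_fiber_mass (hμ : ∀ x, 0 ≤ μ x) {a : A} (ha : 0 < P a)
    {s : ℝ} (hs : 0 ≤ s) :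
    (2 * max (P a) δ) ^ (-s) ≤
      ∑ x, μ x * (∑ a' ∈ univ.filter (fun a' ↦ f x a' = f x a), P a') ^ (-s) := by
  set T : X → ℝ := fun x ↦ ∑ a' ∈ univ.filter (fun a' ↦ f x a' = f x a), P a'
  have hPT : ∀ x, P a ≤ T x := fun x ↦
    single_le_sum (fun a' _ ↦ hP a') (mem_filter.2 ⟨mem_univ a, rfl⟩)
  have hmean_ge : P a ≤ ∑ x, μ x * T x :=
    calc P a = ∑ x, μ x * P a := by rw [← sum_mul, hμsum, one_mul]
      _ ≤ ∑ x, μ x * T x := by gcongr with x; exacts [hμ x, hPT x]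
  have hmean_le : ∑ x, μ x * T x ≤ 2 * max (P a) δ := by
    linarith [expected_fiber_mass_le f hμsum hP hδ huniv hPsum a, le_max_left (P a) δ,
      le_max_right (P a) δ]
  calc (2 * max (P a) δ) ^ (-s) ≤ (∑ x, μ x * T x) ^ (-s) :=
        rpow_le_rpow_of_nonpos (ha.trans_le hmean_ge) hmean_le (neg_nonpos.2 hs)
    _ ≤ ∑ x, μ x * T x ^ (-s) :=
        (convexOn_rpow_of_nonpos (neg_nonpos.2 hs)).map_sum_le (fun x _ ↦ hμ x) hμsum
          fun x _ ↦ ha.trans_le (hPT x)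

lemma sum_mul_rpow_two_mul_max_le [Fintype β] (hμ : ∀ x, 0 ≤ μ x) {s : ℝ} (hs : 0 ≤ s) :
    ∑ a, P a * (2 * max (P a) δ) ^ (-s) ≤
      ∑ x, μ x * ∑ i, (∑ a ∈ univ.filter (fun a ↦ f x a = i), P a) ^ (1 - s) :=
  calc ∑ a, P a * (2 * max (P a) δ) ^ (-s)
      ≤ ∑ a, P a * ∑ x, μ x * (∑ a' ∈ univ.filter (fun a' ↦ f x a' = f x a), P a') ^ (-s) := by
        refine sum_le_sum fun a _ ↦ ?_
        rcases (hP a).eq_or_lt with ha | ha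
        · simp [← ha]
        · exact mul_le_mul_of_nonneg_left
            (rpow_two_mul_max_le_expected_rpow_fiber_mass f hμsum hP hδ huniv hPsum hμ ha hs)
            (hP a)
    _ = ∑ x, μ x * ∑ a, P a * (∑ a' ∈ univ.filter (fun a' ↦ f x a' = f x a), P a') ^ (-s) := by
        simp only [mul_sum]
        rw [sum_comm]
        exact sum_congr rfl fun x _ ↦ sum_congr rfl fun a _ ↦ by ring
    _ ≤ _ := by
        gcongr with x
        · exact hμ x
        · exact sum_mul_rpow_fiber_le_sum_rpow (f x) P hP s

end Hashing

lemma rpow_neg_mul_sum_mul_rpow_two_mul_max {A : Type*} [Fintype A] {P : A → ℝ}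
    (hP : ∀ a, 0 ≤ P a) {m ε : ℝ} (hm : 0 < m) (hε : 0 < ε) (s : ℝ) :
    m ^ (-s) * ∑ a, P a * (2 * max (P a) (ε / m)) ^ (-s) =
      2 ^ (-s) * ∑ a ∈ univ.filter (fun a ↦ ε / m ≤ P a), P a * (P a ^ (-s) * m ^ (-s)) +
        2 ^ (-s) * ∑ a ∈ univ.filter (fun a ↦ P a < ε / m), P a * ε ^ (-s) := by
  have hterm : ∀ a, m ^ (-s) * (P a * (2 * max (P a) (ε / m)) ^ (-s)) =
      if ε / m ≤ P a then 2 ^ (-s) * (P a * (P a ^ (-s) * m ^ (-s)))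
      else 2 ^ (-s) * (P a * ε ^ (-s)) := by
    intro a
    split_ifs with h
    · rw [max_eq_left h, mul_rpow zero_le_two (hP a)]
      ring
    · rw [max_eq_right (not_le.1 h).le, mul_rpow zero_le_two (by positivity),
        div_rpow hε.le hm.le, rpow_neg hm.le]
      have : m ^ s ≠ 0 := (rpow_pos_of_pos hm s).ne'
      field_simp
  rw [mul_sum, sum_congr rfl fun a _ ↦ hterm a, sum_ite, mul_sum, mul_sum]
  simp only [not_le]

theorem one_shot_direct_lower_bound_general {A E X : Type*} [Fintype A] [Fintype E] [Fintype X]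
    (M : ℕ) (hM : 0 < M) (f : X → A → Fin M)
    (μ : X → ℝ) (hμ : ∀ x, 0 ≤ μ x) (hμsum : ∑ x, μ x = 1)
    (ε : ℝ) (hε : 0 < ε)
    (huniv : ∀ a₁ a₂ : A, a₁ ≠ a₂ →
      ∑ x ∈ Finset.univ.filter (fun x => f x a₁ = f x a₂), μ x ≤ ε / M)
    (PE : E → ℝ) (hPE : ∀ e, 0 ≤ PE e)
    (PA : A → E → ℝ) (hPA : ∀ a e, 0 ≤ PA a e) (hPAsum : ∀ e, ∑ a, PA a e = 1)
    (s : ℝ) (hs : 0 < s) :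
    (2 : ℝ) ^ (-s) * (∑ e, PE e *
        ∑ a ∈ Finset.univ.filter (fun a => ε / M ≤ PA a e),
          PA a e * (PA a e ^ (-s) * (M : ℝ) ^ (-s))) +
      (2 : ℝ) ^ (-s) * (∑ e, PE e *
        ∑ a ∈ Finset.univ.filter (fun a => PA a e < ε / M),
          PA a e * ε ^ (-s)) ≤
    (M : ℝ) ^ (-s) * (∑ x, μ x * ∑ e, PE e * ∑ i : Fin M,
        (∑ a ∈ Finset.univ.filter (fun a => f x a = i), PA a e) ^ (1 - s)) := by
  have hMpos : (0 : ℝ) < M := by exact_mod_cast hM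
  calc _ = ∑ e, PE e * ((M : ℝ) ^ (-s) * ∑ a, PA a e * (2 * max (PA a e) (ε / M)) ^ (-s)) := by
        rw [mul_sum, mul_sum, ← sum_add_distrib]
        refine sum_congr rfl fun e _ ↦ ?_
        rw [rpow_neg_mul_sum_mul_rpow_two_mul_max (hPA · e) hMpos hε s]
        ring
    _ ≤ ∑ e, PE e * ((M : ℝ) ^ (-s) * ∑ x, μ x * ∑ i : Fin M,
          (∑ a ∈ univ.filter (fun a ↦ f x a = i), PA a e) ^ (1 - s)) := by
        gcongr with e
        · exact hPE e
        · exact sum_mul_rpow_two_mul_max_le f hμsum (hPA · e) (by positivity) huniv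
            (hPAsum e).le hμ hs.le
    _ = _ := by
        simp only [mul_sum]
        rw [sum_comm]
        exact sum_congr rfl fun x _ ↦ sum_congr rfl fun e _ ↦ sum_congr rfl fun i _ ↦ by ring

/-- Lower-bound one-shot direct bound: for an `ε`-almost universal₂ random hash
`f_X` into `{1,…,M}` and `s ∈ (0,1]`,
`exp(-s C_{1-s}(f_X(A)|E,X)) ≥ 2^{-s} ∑_{P_{A|E}(a|e) ≥ ε/M} P_{AE}(a,e) P_{A|E}(a|e)^{-s} M^{-s}
 + 2^{-s} ∑_{P_{A|E}(a|e) < ε/M} P_{AE}(a,e) ε^{-s}`. -/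
theorem one_shot_direct_lower_bound {A E X : Type*} [Fintype A] [Fintype E] [Fintype X]
    (M : ℕ) (hM : 0 < M) (f : X → A → Fin M)
    (μ : X → ℝ) (hμ : ∀ x, 0 ≤ μ x) (hμsum : ∑ x, μ x = 1)
    (ε : ℝ) (hε : 0 < ε)
    (huniv : ∀ a₁ a₂ : A, a₁ ≠ a₂ →
      ∑ x ∈ Finset.univ.filter (fun x => f x a₁ = f x a₂), μ x ≤ ε / M)
    (PE : E → ℝ) (hPE : ∀ e, 0 ≤ PE e) (hPEsum : ∑ e, PE e = 1)
    (PA : A → E → ℝ) (hPA : ∀ a e, 0 ≤ PA a e) (hPAsum : ∀ e, ∑ a, PA a e = 1)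
    (s : ℝ) (hs : 0 < s) (hs1 : s ≤ 1) :
    (2 : ℝ) ^ (-s) * (∑ e, PE e *
        ∑ a ∈ Finset.univ.filter (fun a => ε / M ≤ PA a e),
          PA a e * (PA a e ^ (-s) * (M : ℝ) ^ (-s))) +
      (2 : ℝ) ^ (-s) * (∑ e, PE e *
        ∑ a ∈ Finset.univ.filter (fun a => PA a e < ε / M),
          PA a e * ε ^ (-s)) ≤
    (M : ℝ) ^ (-s) * (∑ x, μ x * ∑ e, PE e * ∑ i : Fin M,
        (∑ a ∈ Finset.univ.filter (fun a => f x a = i), PA a e) ^ (1 - s)) :=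
  one_shot_direct_lower_bound_general M hM f μ hμ hμsum ε hε huniv PE hPE PA hPA hPAsum s hs
end

section
/- Converse lower bound in the 1+s direction: Fix c > 1 and s ∈ [0,1]. Any function f : A → {1,…,M} satisfies exp(s C_{1+s}(f(A)|E|P_{AE})) ≥ P_{AE}{(a,e): P_{A|E}(a|e) ≥ c/M} · c^s + (P_{AE}{(a,e): P_{A|E}(a|e) < c/M})^{1+s}. -/
/-!
Fix `e` and an output `m`, and split the fibre mass `Q_m = ∑_{f a = m} P(a|e)` as `x + y`, where
`x` collects the atoms with `P(a|e) ≥ t := c/M` and `y` the others. As `x` is `0` or at least `t`,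
`Q_m^{1+s} = (x + y)(x + y)^s ≥ x t^s + y^{1+s}`. Summed over `m`, the first terms give `t^s` times
the mass of the large atoms, and by the power-mean inequality `(∑_m y_m)^{1+s} ≤ M^s ∑_m y_m^{1+s}`
the second ones bound the `(1+s)`-th power of the small mass; multiplying by `M^s` turns `t^s`
into `c^s`. Jensen's inequality for `u ↦ u^{1+s}` under `P_E` then averages over `e`.
-/

open Finset

theorem mul_rpow_add_rpow_one_add_le {x y t s : ℝ} (hx : 0 ≤ x) (hy : 0 ≤ y) (ht : 0 ≤ t)
    (hs : 0 ≤ s) (hxt : x = 0 ∨ t ≤ x) :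
    x * t ^ s + y ^ (1 + s) ≤ (x + y) ^ (1 + s) := by
  have hxy : 0 ≤ x + y := add_nonneg hx hy
  rw [Real.rpow_add' hxy (by positivity), Real.rpow_add' hy (by positivity), Real.rpow_one,
    Real.rpow_one, add_mul]
  gcongr ?_ + y * ?_
  · rcases hxt with rfl | htx
    · simp
    · gcongr
      linarith
  · exact Real.rpow_le_rpow hy (le_add_of_nonneg_left hx) hs

section

variable {α ι : Type*}

theorem sum_filter_le_eq_zero_or_le {u : Finset α} {p : α → ℝ}
    (hp : ∀ a ∈ u, 0 ≤ p a) (t : ℝ) :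
    ∑ a ∈ u.filter (t ≤ p ·), p a = 0 ∨ t ≤ ∑ a ∈ u.filter (t ≤ p ·), p a := by
  rcases (u.filter (t ≤ p ·)).eq_empty_or_nonempty with h | ⟨a, ha⟩
  · simp [h]
  · exact .inr <| (mem_filter.1 ha).2.trans <|
      single_le_sum (fun b hb => hp b (mem_filter.1 hb).1) ha

theorem sum_filter_mul_rpow_add_rpow_le (u : Finset α) {p : α → ℝ}
    (hp : ∀ a ∈ u, 0 ≤ p a) {t s : ℝ} (ht : 0 ≤ t) (hs : 0 ≤ s) :
    (∑ a ∈ u.filter (t ≤ p ·), p a) * t ^ s +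
        (∑ a ∈ u.filter (fun a => ¬t ≤ p a), p a) ^ (1 + s) ≤
      (∑ a ∈ u, p a) ^ (1 + s) := by
  rw [← sum_filter_add_sum_filter_not u (t ≤ p ·)]
  exact mul_rpow_add_rpow_one_add_le (sum_nonneg fun a ha => hp a (mem_filter.1 ha).1)
    (sum_nonneg fun a ha => hp a (mem_filter.1 ha).1) ht hs (sum_filter_le_eq_zero_or_le hp t)

theorem sum_filter_mul_rpow_add_sum_fiber_rpow_le [Fintype α] [Fintype ι]
    [DecidableEq ι] (f : α → ι) {p : α → ℝ} (hp : ∀ a, 0 ≤ p a) {t s : ℝ} (ht : 0 ≤ t)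
    (hs : 0 ≤ s) :
    (∑ a ∈ univ.filter (t ≤ p ·), p a) * t ^ s +
        ∑ m, (∑ a ∈ univ.filter (fun a => ¬t ≤ p a ∧ f a = m), p a) ^ (1 + s) ≤
      ∑ m, (∑ a ∈ univ.filter (f · = m), p a) ^ (1 + s) := by
  rw [← sum_fiberwise (univ.filter (t ≤ p ·)) f p, sum_mul, ← sum_add_distrib]
  gcongr with m
  simpa only [filter_filter, and_comm] using
    sum_filter_mul_rpow_add_rpow_le (univ.filter (f · = m)) (fun a _ => hp a) ht hs

theorem sum_filter_mul_rpow_add_rpow_le_card_rpow_mul [Fintype α] [Fintype ι]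
    [DecidableEq ι] (f : α → ι) (hι : 0 < Fintype.card ι) {p : α → ℝ} (hp : ∀ a, 0 ≤ p a)
    {c s : ℝ} (hc : 0 ≤ c) (hs : 0 ≤ s) :
    (∑ a ∈ univ.filter (fun a => c / Fintype.card ι ≤ p a), p a) * c ^ s +
        (∑ a ∈ univ.filter (fun a => p a < c / Fintype.card ι), p a) ^ (1 + s) ≤
      (Fintype.card ι : ℝ) ^ s * ∑ m, (∑ a ∈ univ.filter (f · = m), p a) ^ (1 + s) := by
  set M : ℝ := (Fintype.card ι : ℝ)
  have hM : 0 < M := Nat.cast_pos.2 hι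
  set Qs : ι → ℝ := fun m => ∑ a ∈ univ.filter (fun a => ¬c / M ≤ p a ∧ f a = m), p a
  have hsmall : ∑ a ∈ univ.filter (fun a => p a < c / M), p a = ∑ m, Qs m := by
    simp only [Qs, ← filter_filter, not_le]
    exact (sum_fiberwise _ f p).symm
  have hpowmean : (∑ m, Qs m) ^ (1 + s) ≤ M ^ s * ∑ m, Qs m ^ (1 + s) := by
    have := Real.rpow_sum_le_const_mul_sum_rpow_of_nonneg univ (p := 1 + s) (by linarith)
      (fun m _ => sum_nonneg fun a _ => hp a : ∀ m ∈ univ, 0 ≤ Qs m)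
    rwa [card_univ, add_sub_cancel_left] at this
  calc _ = M ^ s * ((∑ a ∈ univ.filter (fun a => c / M ≤ p a), p a) * (c / M) ^ s) +
        (∑ m, Qs m) ^ (1 + s) := by
        rw [hsmall, Real.div_rpow hc hM.le]
        field_simp
    _ ≤ M ^ s * ((∑ a ∈ univ.filter (fun a => c / M ≤ p a), p a) * (c / M) ^ s +
        ∑ m, Qs m ^ (1 + s)) := by
        rw [mul_add]
        gcongr
    _ ≤ _ := by
        gcongr
        exact sum_filter_mul_rpow_add_sum_fiber_rpow_le f hp (by positivity) hs

end

theorem converse_lower_bound_one_plus_s_general {A E : Type*} [Fintype A] [Fintype E]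
    (M : ℕ) (hM : 0 < M) (f : A → Fin M)
    (PE : E → ℝ) (hPE : ∀ e, 0 ≤ PE e) (hPEsum : ∑ e, PE e = 1)
    (PA : A → E → ℝ) (hPA : ∀ a e, 0 ≤ PA a e)
    (s : ℝ) (hs : 0 < s) (c : ℝ) (hc : 1 < c) :
    (∑ e, PE e * ∑ a ∈ Finset.univ.filter (fun a => c / M ≤ PA a e), PA a e) * c ^ s +
        (∑ e, PE e *
          ∑ a ∈ Finset.univ.filter (fun a => PA a e < c / M), PA a e) ^ (1 + s) ≤
      (M : ℝ) ^ s * (∑ e, PE e * ∑ m : Fin M,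
        (∑ a ∈ Finset.univ.filter (fun a => f a = m), PA a e) ^ (1 + s)) := by
  set S : E → ℝ := fun e => ∑ a ∈ univ.filter (fun a => PA a e < c / M), PA a e
  have hconditional (e : E) :
      (∑ a ∈ univ.filter (fun a => c / M ≤ PA a e), PA a e) * c ^ s + S e ^ (1 + s) ≤
        (M : ℝ) ^ s * ∑ m : Fin M, (∑ a ∈ univ.filter (f · = m), PA a e) ^ (1 + s) := by
    simpa using sum_filter_mul_rpow_add_rpow_le_card_rpow_mul f (by simpa using hM)
      (fun a => hPA a e) (by linarith) hs.le
  have hjensen : (∑ e, PE e * S e) ^ (1 + s) ≤ ∑ e, PE e * S e ^ (1 + s) :=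
    Real.rpow_arith_mean_le_arith_mean_rpow univ PE S (fun e _ => hPE e) hPEsum
      (fun e _ => sum_nonneg fun a _ => hPA a e) (by linarith)
  calc _ ≤ ∑ e, PE e * ((∑ a ∈ univ.filter (fun a => c / M ≤ PA a e), PA a e) * c ^ s +
          S e ^ (1 + s)) := by
        simp only [mul_add, sum_add_distrib, sum_mul, mul_assoc]
        gcongr
    _ ≤ ∑ e, PE e * ((M : ℝ) ^ s *
          ∑ m : Fin M, (∑ a ∈ univ.filter (f · = m), PA a e) ^ (1 + s)) :=
        sum_le_sum fun e _ => mul_le_mul_of_nonneg_left (hconditional e) (hPE e)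
    _ = _ := by
        rw [mul_sum]
        exact sum_congr rfl fun e _ => mul_left_comm _ _ _

/-- Converse lower bound in the `1+s` direction: for `c > 1`, `s ∈ (0,1]` and any
function `f : A → {1,…,M}`,
`exp(s C_{1+s}(f(A)|E|P_{AE})) ≥ c^s · P_{AE}{P_{A|E} ≥ c/M} + (P_{AE}{P_{A|E} < c/M})^{1+s}`. -/
theorem converse_lower_bound_one_plus_s {A E : Type*} [Fintype A] [Fintype E]
    (M : ℕ) (hM : 0 < M) (f : A → Fin M)
    (PE : E → ℝ) (hPE : ∀ e, 0 ≤ PE e) (hPEsum : ∑ e, PE e = 1)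
    (PA : A → E → ℝ) (hPA : ∀ a e, 0 ≤ PA a e) (hPAsum : ∀ e, ∑ a, PA a e = 1)
    (s : ℝ) (hs : 0 < s) (hs1 : s ≤ 1) (c : ℝ) (hc : 1 < c) :
    (∑ e, PE e * ∑ a ∈ Finset.univ.filter (fun a => c / M ≤ PA a e), PA a e) * c ^ s +
        (∑ e, PE e *
          ∑ a ∈ Finset.univ.filter (fun a => PA a e < c / M), PA a e) ^ (1 + s) ≤
      (M : ℝ) ^ s * (∑ e, PE e * ∑ m : Fin M,
        (∑ a ∈ Finset.univ.filter (fun a => f a = m), PA a e) ^ (1 + s)) :=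
  converse_lower_bound_one_plus_s_general M hM f PE hPE hPEsum PA hPA s hs c hc
end

section
/- Key-rate consequence of data processing: For a joint i.i.d. source P_{AE}^n on A^n × E^n, any function f : A^n → {1,…,⌈e^{nR}⌉}, and any s > 0, the security measure satisfies C_{1+s}(f(A^n)|E^n|P_{AE}^n) ≥ nR - n·H_{1+s}(A|E|P_{AE}) - 1; in particular, if R > H_{1+s}(A|E|P_{AE}) then (1/n)·C_{1+s}(f(A^n)|E^n|P_{AE}^n) is bounded below by R - H_{1+s}(A|E|P_{AE}) - 1/n, and so cannot converge to 0. -/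
/-!
Since `x ↦ x ^ (1 + s)` is superadditive on `[0, ∞)`, for each `eⁿ` the sum of
`P(aⁿ, eⁿ) ^ (1 + s)` over a fibre of `f` is at most the `(1 + s)`-th power of the fibre's mass;
this is the data processing inequality `H_{1+s}(f(Aⁿ)|Eⁿ) ≤ H_{1+s}(Aⁿ|Eⁿ)`. For the i.i.d. source
the Rényi sum `∑ P(aⁿ, eⁿ) ^ (1 + s) P(eⁿ) ^ (-s)` factorises into the `n`-th power of the
single-letter one, so `H_{1+s}(Aⁿ|Eⁿ) = n H_{1+s}(A|E)`, and `log ⌈e^{nR}⌉ ≥ nR`.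
-/

open Finset

theorem Real.sum_rpow_le_rpow_sum_s16 {ι : Type*} (s : Finset ι) {g : ι → ℝ}
    (hg : ∀ i ∈ s, 0 ≤ g i) {p : ℝ} (hp : 1 ≤ p) :
    ∑ i ∈ s, g i ^ p ≤ (∑ i ∈ s, g i) ^ p := by
  induction s using Finset.cons_induction with
  | empty => simp [Real.zero_rpow (by linarith : p ≠ 0)]
  | cons a s _ ih =>
    rw [sum_cons, sum_cons]
    have hs : ∀ i ∈ s, 0 ≤ g i := fun i hi => hg i (mem_cons_of_mem hi)
    calc g a ^ p + ∑ i ∈ s, g i ^ p ≤ g a ^ p + (∑ i ∈ s, g i) ^ p := by gcongr; exact ih hs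
      _ ≤ (g a + ∑ i ∈ s, g i) ^ p :=
        Real.add_rpow_le_rpow_add (hg a (mem_cons_self a s)) (sum_nonneg hs) hp

theorem sum_rpow_mul_le_sum_fiberwise_rpow_mul {X Y M : Type*} [Fintype X] [Fintype Y]
    [Fintype M] [DecidableEq M] (f : X → M) {Q : X → Y → ℝ} (hQ : ∀ x y, 0 ≤ Q x y)
    {c : Y → ℝ} (hc : ∀ y, 0 ≤ c y) {p : ℝ} (hp : 1 ≤ p) :
    ∑ y, ∑ x, Q x y ^ p * c y ≤
      ∑ y, ∑ m, (∑ x ∈ univ.filter (fun x => f x = m), Q x y) ^ p * c y := by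
  gcongr with y
  rw [← sum_mul, ← sum_mul, ← sum_fiberwise univ f]
  refine mul_le_mul_of_nonneg_right (sum_le_sum fun m _ => ?_) (hc y)
  exact Real.sum_rpow_le_rpow_sum_s16 _ (fun x _ => hQ x y) hp

theorem sum_sum_prod_eq_sum_pow {R A E : Type*} [CommSemiring R] [Fintype A] [Fintype E]
    (g : A × E → R) (n : ℕ) :
    ∑ e : Fin n → E, ∑ a : Fin n → A, ∏ i, g (a i, e i) = (∑ p, g p) ^ n := by
  rw [Fintype.sum_pow, ← (Equiv.arrowProdEquivProdArrow _ _ _).symm.sum_comp,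
    Fintype.sum_prod_type, sum_comm]
  rfl

theorem sum_pi_rpow_mul_marginal_rpow_eq_pow {A E : Type*} [Fintype A] [Fintype E] {P : A × E → ℝ}
    (hP : ∀ p, 0 ≤ P p) (s : ℝ) (n : ℕ) :
    ∑ e : Fin n → E, ∑ a : Fin n → A,
        (∏ i, P (a i, e i)) ^ (1 + s) * (∏ i, ∑ x, P (x, e i)) ^ (-s) =
      (∑ p : A × E, P p ^ (1 + s) * (∑ x, P (x, p.2)) ^ (-s)) ^ n := by
  rw [← sum_sum_prod_eq_sum_pow]
  refine sum_congr rfl fun e _ => sum_congr rfl fun a _ => ?_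
  rw [prod_mul_distrib, Real.finsetProd_rpow _ _ (fun i _ => hP _),
    Real.finsetProd_rpow _ _ (fun i _ => sum_nonneg fun x _ => hP _)]

theorem sum_rpow_mul_marginal_rpow_pos {A E : Type*} [Fintype A] [Fintype E] {P : A × E → ℝ}
    (hP : ∀ p, 0 ≤ P p) {p₀ : A × E} (hp₀ : 0 < P p₀) (s t : ℝ) :
    0 < ∑ p : A × E, P p ^ s * (∑ x, P (x, p.2)) ^ t := by
  have hmarg : 0 < ∑ x, P (x, p₀.2) :=
    hp₀.trans_le (single_le_sum (f := fun x => P (x, p₀.2)) (fun x _ => hP _) (mem_univ p₀.1))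
  have hmarg_nonneg (p : A × E) : 0 ≤ ∑ x, P (x, p.2) := sum_nonneg fun x _ => hP _
  exact sum_pos'
    (fun p _ => mul_nonneg (Real.rpow_nonneg (hP p) _) (Real.rpow_nonneg (hmarg_nonneg p) _))
    ⟨p₀, mem_univ _, mul_pos (Real.rpow_pos_of_pos hp₀ _) (Real.rpow_pos_of_pos hmarg _)⟩

theorem Real.le_log_natCeil_exp (x : ℝ) : x ≤ Real.log ⌈Real.exp x⌉₊ := by
  calc x = Real.log (Real.exp x) := (Real.log_exp x).symm
    _ ≤ Real.log ⌈Real.exp x⌉₊ := Real.log_le_log (Real.exp_pos x) (Nat.le_ceil _)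

/-- Key-rate consequence of data processing: for the i.i.d. source `P^n`, any
function `f : Aⁿ → {1,…,⌈e^{nR}⌉}` and `s > 0`,
`C_{1+s}(f(Aⁿ)|Eⁿ|P^n) ≥ nR - n H_{1+s}(A|E|P) - 1`; in particular, if
`R > H_{1+s}(A|E|P)` then `(1/n) C_{1+s}(f(Aⁿ)|Eⁿ|P^n) ≥ R - H_{1+s}(A|E|P) - 1/n`. -/
theorem key_rate_data_processing {A E : Type*} [Fintype A] [Fintype E]
    (P : A × E → ℝ) (hP : ∀ p, 0 ≤ P p) (hPsum : ∑ p, P p = 1)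
    (n : ℕ) (hn : 0 < n) (R s : ℝ) (hs : 0 < s)
    (f : (Fin n → A) → Fin (Nat.ceil (Real.exp (n * R)))) :
    let Mn : ℝ := (Nat.ceil (Real.exp (n * R)) : ℝ)
    let PEn : (Fin n → E) → ℝ := fun e => ∏ i, ∑ a, P (a, e i)
    let Pfn : Fin (Nat.ceil (Real.exp (n * R))) → (Fin n → E) → ℝ :=
      fun m e => ∑ av ∈ Finset.univ.filter (fun av => f av = m), ∏ i, P (av i, e i)
    let Hf : ℝ :=
      -(1/s) * Real.log (∑ e : Fin n → E,
        ∑ m, Pfn m e ^ (1 + s) * PEn e ^ (-s))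
    let H1 : ℝ :=
      -(1/s) * Real.log (∑ p : A × E, P p ^ (1 + s) * (∑ a, P (a, p.2)) ^ (-s))
    (n * R - n * H1 - 1 ≤ Real.log Mn - Hf) ∧
      (H1 < R → R - H1 - 1/n ≤ (1/n) * (Real.log Mn - Hf)) := by
  intro Mn PEn Pfn Hf H1
  obtain ⟨p₀, -, hp₀⟩ := exists_ne_zero_of_sum_ne_zero (hPsum ▸ one_ne_zero : ∑ p, P p ≠ 0)
  have hS1 : 0 < ∑ p : A × E, P p ^ (1 + s) * (∑ a, P (a, p.2)) ^ (-s) :=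
    sum_rpow_mul_marginal_rpow_pos hP ((hP p₀).lt_of_ne' hp₀) _ _
  have hdata : (∑ p : A × E, P p ^ (1 + s) * (∑ a, P (a, p.2)) ^ (-s)) ^ n ≤
      ∑ e, ∑ m, Pfn m e ^ (1 + s) * PEn e ^ (-s) := by
    rw [← sum_pi_rpow_mul_marginal_rpow_eq_pow hP]
    exact sum_rpow_mul_le_sum_fiberwise_rpow_mul f (fun a e => prod_nonneg fun i _ => hP _)
      (fun e => Real.rpow_nonneg (prod_nonneg fun i _ => sum_nonneg fun a _ => hP _) _)
      (by linarith)
  have hHf : Hf ≤ n * H1 := by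
    have hlog := Real.log_le_log (pow_pos hS1 n) hdata
    rw [Real.log_pow] at hlog
    have := mul_le_mul_of_nonneg_left hlog (one_div_pos.2 hs).le
    simp only [Hf, H1]
    linarith
  have hbound : n * R - n * H1 - 1 ≤ Real.log Mn - Hf := by
    linarith [Real.le_log_natCeil_exp (n * R)]
  refine ⟨hbound, fun _ => ?_⟩
  have hn' : (0 : ℝ) < n := by exact_mod_cast hn
  calc R - H1 - 1 / n = 1 / n * (n * R - n * H1 - 1) := by field_simp
    _ ≤ 1 / n * (Real.log Mn - Hf) := by gcongr
end
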